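/- Let T > 0, let N be a positive integer with τ = T/N ≤ 1, and let Q be a symmetric positive definite M₁M₂×M₁M₂ real matrix such that the symmetric part of Q·A, namely (Q·A + (Q·A)ᵀ)/2, is negative semidefinite. Suppose vectors e^0 = 0, e^1, …, e^N ∈ ℝ^{M₁M₂} and R^{1/2}, …, R^{N−1/2} ∈ ℝ^{M₁M₂} satisfy, for n = 1,…,N, (e^n − e^{n−1})/τ = A·(e^{n−1} + e^n) + R^{n−1/2}. Then for every n = 1,…,N: ‖e^n‖²_Q ≤ (exp(2T) − 1)·max_{1≤k≤n} ‖R^{k−1/2}‖²_Q, where ‖v‖²_Q = h₁·h₂·vᵀQv. -/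

import Mathlib

open Matrix Kronecker

/-- The Grünwald–Letnikov coefficients `g_k^{(γ)}`. -/
noncomputable def gcoef (γ : ℝ) : ℕ → ℝ
  | 0 => 1
  | (k+1) => (1 - (γ + 1) / (k + 1 : ℕ)) * gcoef γ k

/-- The WSGD coefficients `w_k^{(γ)}`. -/
noncomputable def wcoef (γ : ℝ) : ℕ → ℝ
  | 0 => γ / 2 * gcoef γ 0
  | (k+1) => γ / 2 * gcoef γ (k+1) + (2 - γ) / 2 * gcoef γ k

/-- The `m × m` lower-Hessenberg Toeplitz matrix `G_γ`. -/
noncomputable def Gmat (γ : ℝ) (m : ℕ) : Matrix (Fin m) (Fin m) ℝ :=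
  Matrix.of fun i j => if (j : ℕ) ≤ (i : ℕ) + 1 then wcoef γ ((i : ℕ) + 1 - (j : ℕ)) else 0

/-!
Testing the error equation against `Q (eⁿ⁻¹ + eⁿ)` turns its left side into
`(‖eⁿ‖²_Q − ‖eⁿ⁻¹‖²_Q) / τ`, while the `A`-term drops out because `QA` has nonpositive symmetric
part. Bounding the truncation term by Young's inequality for the `Q`-inner product gives
`(1 − τ/2) ‖eⁿ‖²_Q ≤ (1 + τ/2) ‖eⁿ⁻¹‖²_Q + τ ‖Rⁿ⁻¹ᐟ²‖²_Q`, and since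
`1 + τ/2 ≤ (1 − τ/2) e^{2τ}` for `τ ≤ 1`, induction from `e⁰ = 0` gives
`‖eⁿ‖²_Q ≤ (e^{2τn} − 1) max_k ‖Rᵏ⁻¹ᐟ²‖²_Q`, and `τn ≤ T`.
-/

namespace Matrix

variable {ι : Type*} [Fintype ι]

theorem IsSymm.dotProduct_mulVec_comm {α : Type*} [CommSemiring α] {S : Matrix ι ι α}
    (hS : S.IsSymm) (x y : ι → α) : x ⬝ᵥ S *ᵥ y = y ⬝ᵥ S *ᵥ x := by
  rw [← dotProduct_transpose_mulVec, hS.eq]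

theorem PosSemidef.two_mul_dotProduct_mulVec_le {Q : Matrix ι ι ℝ} (hQ : Q.PosSemidef)
    (x y : ι → ℝ) : 2 * (x ⬝ᵥ Q *ᵥ y) ≤ x ⬝ᵥ Q *ᵥ x + y ⬝ᵥ Q *ᵥ y := by
  have hnonneg := hQ.dotProduct_mulVec_nonneg (x - y)
  simp only [star_trivial, mulVec_sub, dotProduct_sub, sub_dotProduct,
    (isHermitian_iff_isSymm.mp hQ.isHermitian).dotProduct_mulVec_comm y x] at hnonneg
  linarith

theorem dotProduct_mulVec_self_nonpos_of_posSemidef_neg {B : Matrix ι ι ℝ}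
    (hB : (-(((1 : ℝ) / 2) • (B + Bᵀ))).PosSemidef) (x : ι → ℝ) : x ⬝ᵥ B *ᵥ x ≤ 0 := by
  have hnonneg := hB.dotProduct_mulVec_nonneg x
  simp only [star_trivial, neg_mulVec, smul_mulVec, add_mulVec, dotProduct_neg, dotProduct_smul,
    dotProduct_add, dotProduct_transpose_mulVec, smul_eq_mul] at hnonneg
  linarith

theorem crankNicolson_energy_step {Q A : Matrix ι ι ℝ} (hQ : Q.PosSemidef)
    (hQA : ∀ x, x ⬝ᵥ (Q * A) *ᵥ x ≤ 0) {τ : ℝ} (hτ : 0 < τ) {a c r : ι → ℝ}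
    (hscheme : (1 / τ) • (c - a) = A *ᵥ (a + c) + r) :
    (1 - τ / 2) * (c ⬝ᵥ Q *ᵥ c) ≤ (1 + τ / 2) * (a ⬝ᵥ Q *ᵥ a) + τ * (r ⬝ᵥ Q *ᵥ r) := by
  have hstep : c - a = τ • (A *ᵥ (a + c)) + τ • r := by
    rw [← smul_add, ← hscheme, smul_smul, mul_one_div_cancel hτ.ne', one_smul]
  have hQsymm := isHermitian_iff_isSymm.mp hQ.isHermitian
  set u := a + c
  have hdiff : c ⬝ᵥ Q *ᵥ c - a ⬝ᵥ Q *ᵥ a = u ⬝ᵥ Q *ᵥ (c - a) := by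
    simp only [u, mulVec_sub, dotProduct_sub, add_dotProduct, hQsymm.dotProduct_mulVec_comm a c]
    ring
  have hsplit : u ⬝ᵥ Q *ᵥ (c - a) = τ * (u ⬝ᵥ (Q * A) *ᵥ u) + τ * (u ⬝ᵥ Q *ᵥ r) := by
    simp only [hstep, mulVec_add, mulVec_smul, dotProduct_add, dotProduct_smul, smul_eq_mul,
      mulVec_mulVec]
  have hforcing : u ⬝ᵥ Q *ᵥ r ≤ u ⬝ᵥ Q *ᵥ u / 4 + r ⬝ᵥ Q *ᵥ r := by
    have hyoung := hQ.two_mul_dotProduct_mulVec_le ((1 / 2 : ℝ) • u) r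
    simp only [mulVec_smul, dotProduct_smul, smul_dotProduct, smul_eq_mul] at hyoung
    linarith
  have hsum : u ⬝ᵥ Q *ᵥ u ≤ 2 * (a ⬝ᵥ Q *ᵥ a) + 2 * (c ⬝ᵥ Q *ᵥ c) := by
    have hcross := hQ.two_mul_dotProduct_mulVec_le a c
    simp only [u, mulVec_add, dotProduct_add, add_dotProduct,
      hQsymm.dotProduct_mulVec_comm c a] at hcross ⊢
    linarith
  linarith [mul_nonpos_of_nonneg_of_nonpos hτ.le (hQA u), mul_le_mul_of_nonneg_left hforcing hτ.le,
    mul_le_mul_of_nonneg_left hsum hτ.le]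

end Matrix

theorem one_add_half_le_one_sub_half_mul_exp {τ : ℝ} (hτ0 : 0 ≤ τ) (hτ1 : τ ≤ 1) :
    1 + τ / 2 ≤ (1 - τ / 2) * Real.exp (2 * τ) := by
  have hexp : (1 + τ) ^ 2 ≤ Real.exp (2 * τ) := by
    rw [mul_comm, Real.exp_mul, Real.rpow_two]
    gcongr
    linarith [Real.add_one_le_exp τ]
  calc 1 + τ / 2 ≤ (1 - τ / 2) * (1 + τ) ^ 2 := by
        nlinarith [mul_le_mul_of_nonneg_left (pow_le_one₀ hτ0 hτ1 : τ ^ 2 ≤ 1) hτ0]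
    _ ≤ (1 - τ / 2) * Real.exp (2 * τ) := by gcongr; linarith

theorem le_exp_sub_one_mul_of_crankNicolson {q s : ℕ → ℝ} {τ B : ℝ} {n : ℕ}
    (hτ0 : 0 ≤ τ) (hτ1 : τ ≤ 1) (hB : 0 ≤ B) (hq0 : q 0 = 0)
    (hstep : ∀ m < n, (1 - τ / 2) * q (m + 1) ≤ (1 + τ / 2) * q m + τ * s (m + 1))
    (hs : ∀ k ∈ Finset.Icc 1 n, s k ≤ B) :
    q n ≤ (Real.exp (2 * τ * n) - 1) * B := by
  induction n with
  | zero => simp [hq0]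
  | succ m ih =>
    have hprev := ih (fun k hk => hstep k (by omega))
      (fun k hk => hs k (Finset.Icc_subset_Icc_right (by omega) hk))
    set X := Real.exp (2 * τ * m)
    have hexp : Real.exp (2 * τ * ↑(m + 1)) = X * Real.exp (2 * τ) := by
      rw [← Real.exp_add]; push_cast; ring_nf
    have hgrowth := mul_nonneg (mul_nonneg (Real.exp_pos (2 * τ * m)).le hB)
      (sub_nonneg.mpr (one_add_half_le_one_sub_half_mul_exp hτ0 hτ1))
    rw [hexp]
    refine le_of_mul_le_mul_left ?_ (by linarith : 0 < 1 - τ / 2)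
    calc (1 - τ / 2) * q (m + 1) ≤ (1 + τ / 2) * q m + τ * s (m + 1) := hstep m (by omega)
      _ ≤ (1 + τ / 2) * ((X - 1) * B) + τ * B := by
        gcongr
        exact hs (m + 1) (by simp)
      _ ≤ (1 - τ / 2) * ((X * Real.exp (2 * τ) - 1) * B) := by linarith

theorem CN_scheme_2D_error_estimate_general (T : ℝ) (hT : 0 < T)
    (M₁ M₂ N : ℕ) (hτ : T / N ≤ 1)
    (xL xR yL yR : ℝ) (hx : xL < xR) (hy : yL < yR)
    (h₁ h₂ : ℝ) (hh₁ : h₁ = (xR - xL) / (M₁ + 1)) (hh₂ : h₂ = (yR - yL) / (M₂ + 1))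
    (A : Matrix (Fin M₂ × Fin M₁) (Fin M₂ × Fin M₁) ℝ)
    (Q : Matrix (Fin M₂ × Fin M₁) (Fin M₂ × Fin M₁) ℝ) (hQ : Q.PosDef)
    (hQA : (-(((1 : ℝ) / 2) • (Q * A + (Q * A)ᵀ))).PosSemidef)
    (er R : ℕ → (Fin M₂ × Fin M₁) → ℝ) (her0 : er 0 = 0)
    (heq : ∀ n, 1 ≤ n → n ≤ N →
      (1 / (T / N)) • (er n - er (n - 1)) = A *ᵥ (er (n - 1) + er n) + R n) :
    ∀ n, ∀ hn1 : 1 ≤ n, n ≤ N →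
      h₁ * h₂ * (er n ⬝ᵥ (Q *ᵥ er n)) ≤
        (Real.exp (2 * T) - 1) *
          (Finset.Icc 1 n).sup' (Finset.nonempty_Icc.mpr hn1)
            (fun k => h₁ * h₂ * (R k ⬝ᵥ (Q *ᵥ R k))) := by
  intro n hn1 hnN
  have hNpos : (0 : ℝ) < N := by exact_mod_cast (by omega : 0 < N)
  set τ := T / N
  have hτ0 : 0 < τ := div_pos hT hNpos
  have hh : 0 ≤ h₁ * h₂ := by
    have := sub_pos.2 hx
    have := sub_pos.2 hy
    rw [hh₁, hh₂]
    positivity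
  set B := (Finset.Icc 1 n).sup' (Finset.nonempty_Icc.mpr hn1)
    (fun k => h₁ * h₂ * (R k ⬝ᵥ (Q *ᵥ R k)))
  have hRB : ∀ k ∈ Finset.Icc 1 n, h₁ * h₂ * (R k ⬝ᵥ (Q *ᵥ R k)) ≤ B :=
    fun k hk => Finset.le_sup' (fun k => h₁ * h₂ * (R k ⬝ᵥ (Q *ᵥ R k))) hk
  have hB0 : 0 ≤ B :=
    (mul_nonneg hh (by simpa using hQ.posSemidef.dotProduct_mulVec_nonneg (R 1))).trans
      (hRB 1 (Finset.mem_Icc.mpr ⟨le_rfl, hn1⟩))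
  have hstep : ∀ m < n, (1 - τ / 2) * (h₁ * h₂ * (er (m + 1) ⬝ᵥ Q *ᵥ er (m + 1))) ≤
      (1 + τ / 2) * (h₁ * h₂ * (er m ⬝ᵥ Q *ᵥ er m)) +
        τ * (h₁ * h₂ * (R (m + 1) ⬝ᵥ Q *ᵥ R (m + 1))) := by
    intro m hm
    have hscheme := heq (m + 1) (by omega) (by omega)
    rw [Nat.add_sub_cancel] at hscheme
    have := mul_le_mul_of_nonneg_left (crankNicolson_energy_step hQ.posSemidef
      (dotProduct_mulVec_self_nonpos_of_posSemidef_neg hQA) hτ0 hscheme) hh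
    linarith
  have hτn : τ * n ≤ T := by
    rw [div_mul_eq_mul_div, div_le_iff₀ hNpos]
    exact mul_le_mul_of_nonneg_left (by exact_mod_cast hnN) hT.le
  calc h₁ * h₂ * (er n ⬝ᵥ (Q *ᵥ er n)) ≤ (Real.exp (2 * τ * n) - 1) * B :=
        le_exp_sub_one_mul_of_crankNicolson (q := fun m => h₁ * h₂ * (er m ⬝ᵥ Q *ᵥ er m))
          hτ0.le hτ hB0 (by simp [her0]) hstep hRB
    _ ≤ (Real.exp (2 * T) - 1) * B := by
      gcongr (Real.exp ?_ - 1) * B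
      linarith

/-- Two-dimensional convergence estimate (Theorem 3.2, in terms of the error equation):
if `Q` is symmetric positive definite with `(QA + (QA)ᵀ)/2` negative semidefinite and the
errors satisfy the Crank–Nicolson/WSGD error equation with truncation errors `Rⁿ⁻¹ᐟ²`, then
`‖eⁿ‖²_Q ≤ (e^{2T} − 1) max_{1≤k≤n}‖Rᵏ⁻¹ᐟ²‖²_Q` where `‖v‖²_Q = h₁ h₂ vᵀQv`. -/
theorem CN_scheme_2D_error_estimate (α β T : ℝ)
    (hα : α ∈ Set.Ioo (1 : ℝ) 2) (hβ : β ∈ Set.Ioo (1 : ℝ) 2) (hT : 0 < T)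
    (M₁ M₂ N : ℕ) (hM₁ : 0 < M₁) (hM₂ : 0 < M₂) (hN : 0 < N) (hτ : T / N ≤ 1)
    (xL xR yL yR : ℝ) (hx : xL < xR) (hy : yL < yR)
    (h₁ h₂ : ℝ) (hh₁ : h₁ = (xR - xL) / (M₁ + 1)) (hh₂ : h₂ = (yR - yL) / (M₂ + 1))
    (d e : ℝ → ℝ → ℝ)
    (hde : ∀ x ∈ Set.Ioo xL xR, ∀ y ∈ Set.Ioo yL yR, 0 ≤ d x y ∧ 0 ≤ e x y)
    (D E A : Matrix (Fin M₂ × Fin M₁) (Fin M₂ × Fin M₁) ℝ)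
    (hD : D = Matrix.diagonal fun p => d (xL + ((p.2 : ℕ) + 1) * h₁) (yL + ((p.1 : ℕ) + 1) * h₂))
    (hE : E = Matrix.diagonal fun p => e (xL + ((p.2 : ℕ) + 1) * h₁) (yL + ((p.1 : ℕ) + 1) * h₂))
    (hA : A = (1 / (2 * h₁ ^ α)) • (D * ((1 : Matrix (Fin M₂) (Fin M₂) ℝ) ⊗ₖ Gmat α M₁)) +
              (1 / (2 * h₂ ^ β)) • (E * (Gmat β M₂ ⊗ₖ (1 : Matrix (Fin M₁) (Fin M₁) ℝ))))
    (Q : Matrix (Fin M₂ × Fin M₁) (Fin M₂ × Fin M₁) ℝ) (hQ : Q.PosDef)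
    (hQA : (-(((1 : ℝ) / 2) • (Q * A + (Q * A)ᵀ))).PosSemidef)
    (er R : ℕ → (Fin M₂ × Fin M₁) → ℝ) (her0 : er 0 = 0)
    (heq : ∀ n, 1 ≤ n → n ≤ N →
      (1 / (T / N)) • (er n - er (n - 1)) = A *ᵥ (er (n - 1) + er n) + R n) :
    ∀ n, ∀ hn1 : 1 ≤ n, n ≤ N →
      h₁ * h₂ * (er n ⬝ᵥ (Q *ᵥ er n)) ≤
        (Real.exp (2 * T) - 1) *
          (Finset.Icc 1 n).sup' (Finset.nonempty_Icc.mpr hn1)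
            (fun k => h₁ * h₂ * (R k ⬝ᵥ (Q *ᵥ R k))) :=
  CN_scheme_2D_error_estimate_general T hT M₁ M₂ N hτ xL xR yL yR hx hy h₁ h₂ hh₁ hh₂ A Q hQ hQA er
    R her0 heq
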